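/- arXiv:2009.13086 — 2 statements merged into one kernel-verified Lean document; each statement's English description precedes it below -/
import Mathlib

section
/- Suppose φ, ψ : (t', t'') → ℝ satisfy (in the distributional sense with a nonnegative measure dμ of density μ̇): ψ ≡ 0, dφ = k dμ, dψ = −(φ dt + dμ). Then φ(t) = φ(t₀)e^{−k(t−t₀)} on (t', t''), φ ≤ 0, and μ̇ = −φ ≥ 0. -/
open Set Real Filter Topology

theorem HasDerivAt.eq_zero_of_eventuallyEq_const {𝕜 F : Type*} [NontriviallyNormedField 𝕜]
    [NormedAddCommGroup F] [NormedSpace 𝕜 F] {f : 𝕜 → F} {f' c : F} {x : 𝕜}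
    (hf : HasDerivAt f f' x) (hc : f =ᶠ[𝓝 x] fun _ ↦ c) : f' = 0 :=
  hf.unique ((hasDerivAt_const x c).congr_of_eventuallyEq hc)

theorem IsOpen.eq_mul_exp_of_hasDerivAt_mul_self {s : Set ℝ} (hs : IsOpen s)
    (hs' : IsPreconnected s) {f : ℝ → ℝ} {c : ℝ} (hf : ∀ t ∈ s, HasDerivAt f (c * f t) t)
    {t t₀ : ℝ} (ht : t ∈ s) (ht₀ : t₀ ∈ s) : f t = f t₀ * exp (c * (t - t₀)) := by
  set g : ℝ → ℝ := fun t ↦ f t * exp (-(c * t))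
  have hg : ∀ t ∈ s, HasDerivAt g 0 t := fun t ht ↦ by
    have hexp : HasDerivAt (fun t ↦ exp (-(c * t))) (exp (-(c * t)) * -c) t :=
      (((hasDerivAt_id t).const_mul c).neg).exp.congr_deriv (by simp)
    exact ((hf t ht).mul hexp).congr_deriv (by ring)
  have hconst : g t = g t₀ := hs.is_const_of_deriv_eq_zero hs'
    (fun t ht ↦ (hg t ht).differentiableAt.differentiableWithinAt)
    (fun t ht ↦ (hg t ht).deriv) ht ht₀
  calc f t = g t * exp (c * t) := by
        simp only [g, mul_assoc, ← exp_add, neg_add_cancel, exp_zero, mul_one]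
    _ = g t₀ * exp (c * t) := by rw [hconst]
    _ = f t₀ * exp (c * (t - t₀)) := by simp only [g, mul_assoc, ← exp_add]; ring_nf

theorem stmt7_general (k t' t'' : ℝ)
    (φ ψ d : ℝ → ℝ)
    (hψ0 : ∀ t ∈ Set.Ioo t' t'', ψ t = 0)
    (hd : ∀ t ∈ Set.Ioo t' t'', 0 ≤ d t)
    (hφ : ∀ t ∈ Set.Ioo t' t'', HasDerivAt φ (k * d t) t)
    (hψ : ∀ t ∈ Set.Ioo t' t'', HasDerivAt ψ (-(φ t + d t)) t) :
    ∀ t ∈ Set.Ioo t' t'', ∀ t₀ ∈ Set.Ioo t' t'',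
      φ t = φ t₀ * Real.exp (-(k * (t - t₀))) ∧ φ t ≤ 0 ∧ d t = -φ t := by
  have hdφ : ∀ t ∈ Ioo t' t'', d t = -φ t := fun t ht ↦ by
    have hψ_nhds : ψ =ᶠ[𝓝 t] fun _ ↦ 0 := eventually_of_mem (isOpen_Ioo.mem_nhds ht) hψ0
    linarith [(hψ t ht).eq_zero_of_eventuallyEq_const hψ_nhds]
  have hφ_ode : ∀ t ∈ Ioo t' t'', HasDerivAt φ (-k * φ t) t := fun t ht ↦
    (hφ t ht).congr_deriv (by rw [hdφ t ht]; ring)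
  intro t ht t₀ ht₀
  refine ⟨?_, by linarith [hd t ht, hdφ t ht], hdφ t ht⟩
  rw [isOpen_Ioo.eq_mul_exp_of_hasDerivAt_mul_self isPreconnected_Ioo hφ_ode ht ht₀, neg_mul]

theorem stmt7 (k t' t'' : ℝ) (hk : 0 < k) (h : t' < t'')
    (φ ψ d : ℝ → ℝ)
    (hψ0 : ∀ t ∈ Set.Ioo t' t'', ψ t = 0)
    (hd : ∀ t ∈ Set.Ioo t' t'', 0 ≤ d t)
    (hφ : ∀ t ∈ Set.Ioo t' t'', HasDerivAt φ (k * d t) t)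
    (hψ : ∀ t ∈ Set.Ioo t' t'', HasDerivAt ψ (-(φ t + d t)) t) :
    ∀ t ∈ Set.Ioo t' t'', ∀ t₀ ∈ Set.Ioo t' t'',
      φ t = φ t₀ * Real.exp (-(k * (t - t₀))) ∧ φ t ≤ 0 ∧ d t = -φ t :=
  stmt7_general k t' t'' φ ψ d hψ0 hd hφ hψ
end

section
/- For the vertical boundary x ≤ p and the trajectory C'CBO with control u = (−1, −1, +1) touching (p,0) at time t_C = y₀ (where (x₀,y₀) is the start on the tangential parabola, y₀ > 0), with normalization ψ(0) = −1, φ piecewise constant with a single jump Δφ(t_C) = δ ≥ 0, ψ piecewise affine with ψ(t_B) = 0 (t_B > t_C the switching time) and ψ ≤ 0 on [0,t_B], ψ ≥ 0 on [t_B,T], the admissible jump values are exactly 0 ≤ δ ≤ 1/t_C = 1/y₀. -/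
open MeasureTheory Set Real

/-! The costate is affine with slope `-φ₀` up to `t_C` and slope `-(φ₀ + δ)` afterwards.
Since `ψ(t_C) ≤ 0 = ψ(t_B)`, the second slope is nonnegative, i.e. `δ ≤ -φ₀`, while
`ψ(t_C) = -1 - φ₀ t_C ≤ 0` bounds `-φ₀` by `1 / t_C`. Conversely, for `0 ≤ δ ≤ 1 / t_C`, choosing
`φ₀` so that `ψ(t_B) = 0` makes both slopes nonnegative, so `ψ` is monotone and changes sign
exactly at `t_B`. -/

/-- The costate `ψ` with `ψ(0) = -1`, initial value `φ₀` of `φ`, and jump `Δφ(t_C) = δ`. -/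
noncomputable def costate (φ₀ δ t_C t : ℝ) : ℝ :=
  if t ≤ t_C then -1 - φ₀ * t else (-1 - φ₀ * t_C) - (φ₀ + δ) * (t - t_C)

section Costate

variable {φ₀ δ t_C t_B : ℝ}

lemma costate_of_le {t : ℝ} (h : t ≤ t_C) : costate φ₀ δ t_C t = -1 - φ₀ * t := if_pos h

lemma costate_of_lt {t : ℝ} (h : t_C < t) :
    costate φ₀ δ t_C t = (-1 - φ₀ * t_C) - (φ₀ + δ) * (t - t_C) := if_neg h.not_ge

lemma costate_monotone (h₁ : φ₀ ≤ 0) (h₂ : φ₀ + δ ≤ 0) : Monotone (costate φ₀ δ t_C) := by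
  intro a b hab
  unfold costate
  split_ifs with ha hb hb
  · nlinarith
  · nlinarith [mul_nonneg (neg_nonneg.2 h₁) (sub_nonneg.2 ha),
      mul_nonneg (neg_nonneg.2 h₂) (sub_nonneg.2 (not_le.1 hb).le)]
  · linarith
  · nlinarith

lemma jump_mul_le_one_of_costate (h0C : 0 ≤ t_C) (hCB : t_C < t_B)
    (hC : costate φ₀ δ t_C t_C ≤ 0) (hB : costate φ₀ δ t_C t_B = 0) : δ * t_C ≤ 1 := by
  rw [costate_of_le le_rfl] at hC
  rw [costate_of_lt hCB] at hB
  have hslope : φ₀ + δ ≤ 0 := by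
    by_contra! h
    nlinarith [mul_pos h (sub_pos.2 hCB)]
  calc δ * t_C ≤ -φ₀ * t_C := mul_le_mul_of_nonneg_right (by linarith) h0C
    _ ≤ 1 := by linarith

lemma exists_monotone_costate_eq_zero (hδ : 0 ≤ δ) (hδC : δ * t_C ≤ 1) (h0C : 0 ≤ t_C)
    (hCB : t_C < t_B) : ∃ φ₀, Monotone (costate φ₀ δ t_C) ∧ costate φ₀ δ t_C t_B = 0 := by
  have hB : 0 < t_B := h0C.trans_lt hCB
  set φ₀ := (-1 - δ * (t_B - t_C)) / t_B with hφ₀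
  have hφ₀B : φ₀ * t_B = -1 - δ * (t_B - t_C) := div_mul_cancel₀ _ hB.ne'
  have h₁ : φ₀ ≤ 0 := div_nonpos_of_nonpos_of_nonneg (by nlinarith) hB.le
  have h₂ : φ₀ + δ ≤ 0 := by nlinarith
  refine ⟨φ₀, costate_monotone h₁ h₂, ?_⟩
  rw [costate_of_lt hCB]
  linarith

end Costate

theorem stmt16_general (T t_C t_B δ : ℝ) (h0C : 0 < t_C)
    (hCB : t_C < t_B) :
    ((0 ≤ δ ∧ ∃ φ₀ : ℝ, ∃ ψ : ℝ → ℝ,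
        (∀ t, ψ t = if t ≤ t_C then -1 - φ₀ * t
                    else (-1 - φ₀ * t_C) - (φ₀ + δ) * (t - t_C)) ∧
        ψ t_B = 0 ∧ (∀ t ∈ Set.Icc 0 t_B, ψ t ≤ 0) ∧
        (∀ t ∈ Set.Icc t_B T, ψ t ≥ 0))
     ↔ (0 ≤ δ ∧ δ ≤ 1 / t_C)) := by
  rw [le_div_iff₀ h0C]
  constructor
  · rintro ⟨hδ, φ₀, ψ, hψ, hB, hle, -⟩
    obtain rfl : ψ = costate φ₀ δ t_C := funext hψ
    exact ⟨hδ, jump_mul_le_one_of_costate h0C.le hCB (hle t_C ⟨h0C.le, hCB.le⟩) hB⟩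
  · rintro ⟨hδ, hδC⟩
    obtain ⟨φ₀, hmono, hB⟩ := exists_monotone_costate_eq_zero hδ hδC h0C.le hCB
    exact ⟨hδ, φ₀, costate φ₀ δ t_C, fun _ => rfl, hB, fun _ ht => hB ▸ hmono ht.2,
      fun _ ht => hB ▸ hmono ht.1⟩

theorem stmt16 (p T t_C t_B y₀ δ : ℝ) (hp : 0 < p) (h0C : 0 < t_C)
    (hCB : t_C < t_B) (hBT : t_B < T) (hy₀ : t_C = y₀) :
    ((0 ≤ δ ∧ ∃ φ₀ : ℝ, ∃ ψ : ℝ → ℝ,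
        (∀ t, ψ t = if t ≤ t_C then -1 - φ₀ * t
                    else (-1 - φ₀ * t_C) - (φ₀ + δ) * (t - t_C)) ∧
        ψ t_B = 0 ∧ (∀ t ∈ Set.Icc 0 t_B, ψ t ≤ 0) ∧
        (∀ t ∈ Set.Icc t_B T, ψ t ≥ 0))
     ↔ (0 ≤ δ ∧ δ ≤ 1 / t_C)) :=
  stmt16_general T t_C t_B δ h0C hCB
end
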